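/- arXiv:1712.10209 — 2 statements merged into one kernel-verified Lean document; each statement's English description precedes it below -/
import Mathlib

section
/- Let m > 0, λ > 0 and p ∈ ℝ³. Then lim_{R→+∞} ( ∫_{{q ∈ ℝ³ : |q| ≤ R}} dq / (G(p,q) + λ) − 4πR ) = −2π² √(ν|p|² + λ). (This is the large-momentum asymptotics underlying the Ter-Martirosyan–Skornyakov boundary condition: the truncated integral of the singular part grows like 4πR with finite remainder −2π²√(ν|p|²+λ).) -/
/-!
Completing the square, `G(p,q) + λ = |q + c|² + a²` with `c = (μ/2) p` and `a² = ν|p|² + λ`, so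
after a translation the integral is that of `1/(|q|² + a²)` over the ball of radius `R` centred
at `c`. Over the centred ball it equals `4π(R - a arctan(R/a)) = 4πR - 2π²a + o(1)`. Moving the
centre to `c` changes the integral only on the symmetric difference of the two balls, whose two
halves have equal volume `O(|c| R²)` and on which the integrand varies by `O(|c| / R³)`; hence the
change is `O(1/R)`.
-/

open MeasureTheory
open scoped RealInnerProductSpace

noncomputable section

abbrev E3 := EuclideanSpace ℝ (Fin 3)

def mu (m : ℝ) : ℝ := 2 / (m + 1)

def nu (m : ℝ) : ℝ := m * (m + 2) / (m + 1) ^ 2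

def Gker (m : ℝ) (p q : E3) : ℝ := ‖p‖ ^ 2 + ‖q‖ ^ 2 + mu m * ⟪p, q⟫

open Real Filter Metric Set Topology

section SetIntegral

variable {α : Type*} [MeasurableSpace α] {μ : Measure α} {f : α → ℝ} {s t : Set α}

theorem setIntegral_le_of_le_const_real {c : ℝ} (hs : MeasurableSet s) (hμs : μ s ≠ ⊤)
    (hf : ∀ x ∈ s, f x ≤ c) (hfint : IntegrableOn f s μ) :
    ∫ x in s, f x ∂μ ≤ c * μ.real s := by
  simpa [integral_neg] using setIntegral_ge_of_const_le_real (f := fun x => -f x) (c := -c) hs hμs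
    (fun x hx => neg_le_neg (hf x hx)) hfint.neg

theorem abs_setIntegral_sub_setIntegral_le_of_measure_eq (hs : MeasurableSet s)
    (ht : MeasurableSet t) (hfs : IntegrableOn f s μ) (hft : IntegrableOn f t μ)
    (hμ : μ s = μ t) (hμs : μ s ≠ ⊤) {lo hi : ℝ} (hf : ∀ x ∈ symmDiff s t, f x ∈ Icc lo hi) :
    |∫ x in s, f x ∂μ - ∫ x in t, f x ∂μ| ≤ (hi - lo) * μ.real (s \ t) := by
  have hμt : μ t ≠ ⊤ := hμ ▸ hμs
  have hst : μ.real (t \ s) = μ.real (s \ t) := by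
    rw [measureReal_def, measureReal_def, measure_sdiff_symm hs.nullMeasurableSet
      ht.nullMeasurableSet hμ (measure_ne_top_of_subset inter_subset_left hμs)]
  have hdiff : ∫ x in s, f x ∂μ - ∫ x in t, f x ∂μ
      = ∫ x in s \ t, f x ∂μ - ∫ x in t \ s, f x ∂μ := by
    rw [← integral_inter_add_sdiff ht hfs, ← integral_inter_add_sdiff hs hft, inter_comm]
    ring
  have hsd := measure_ne_top_of_subset (sdiff_subset (t := t)) hμs
  have htd := measure_ne_top_of_subset (sdiff_subset (t := s)) hμt
  have h₁ := setIntegral_le_of_le_const_real (hs.diff ht) hsd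
    (fun x hx => (hf x (Or.inl hx)).2) (hfs.mono_set sdiff_subset)
  have h₂ := setIntegral_ge_of_const_le_real (hs.diff ht) hsd
    (fun x hx => (hf x (Or.inl hx)).1) (hfs.mono_set sdiff_subset)
  have h₃ := setIntegral_le_of_le_const_real (ht.diff hs) htd
    (fun x hx => (hf x (Or.inr hx)).2) (hft.mono_set sdiff_subset)
  have h₄ := setIntegral_ge_of_const_le_real (ht.diff hs) htd
    (fun x hx => (hf x (Or.inr hx)).1) (hft.mono_set sdiff_subset)
  rw [hst] at h₃ h₄
  rw [hdiff, abs_le]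
  constructor <;> linarith

end SetIntegral

theorem setIntegral_closedBall_comp_add_right {E : Type*} [NormedAddCommGroup E]
    [MeasurableSpace E] [BorelSpace E] (μ : Measure E) [μ.IsAddRightInvariant]
    (g : E → ℝ) (c : E) (R : ℝ) :
    ∫ q in closedBall 0 R, g (q + c) ∂μ = ∫ q in closedBall c R, g q ∂μ := by
  rw [← (measurePreserving_add_right μ c).setIntegral_preimage_emb
    (MeasurableEquiv.addRight c).measurableEmbedding g (closedBall c R)]
  congr 2
  ext q
  simp [dist_eq_norm]

theorem norm_mem_Icc_of_mem_symmDiff_closedBall {E : Type*} [SeminormedAddCommGroup E]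
    {c q : E} {R : ℝ} (hq : q ∈ symmDiff (closedBall c R) (closedBall 0 R)) :
    ‖q‖ ∈ Icc (R - ‖c‖) (R + ‖c‖) := by
  have h₁ := norm_sub_le q c
  have h₂ := norm_le_norm_add_norm_sub' q c
  rcases hq with ⟨hc, h0⟩ | ⟨h0, hc⟩ <;>
    simp only [mem_closedBall, dist_eq_norm, sub_zero, not_le] at hc h0 <;>
    constructor <;> linarith

theorem measureReal_closedBall_fin_three (x : E3) {r : ℝ} (hr : 0 ≤ r) :
    volume.real (closedBall x r) = 4 / 3 * π * r ^ 3 := by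
  rw [measureReal_def, EuclideanSpace.volume_closedBall_fin_three, ENNReal.toReal_mul,
    ENNReal.toReal_pow, ENNReal.toReal_ofReal hr, ENNReal.toReal_ofReal (by positivity)]
  ring

theorem measureReal_closedBall_sdiff_closedBall_le (c : E3) {R : ℝ} (hc : ‖c‖ ≤ R) :
    volume.real (closedBall c R \ closedBall 0 R) ≤ 4 / 3 * π * (R ^ 3 - (R - ‖c‖) ^ 3) := by
  have hsub : closedBall (0 : E3) (R - ‖c‖) ⊆ closedBall c R := by
    simpa using closedBall_subset_closedBall' (x := (0 : E3)) (y := c) (ε₁ := R - ‖c‖)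
      (ε₂ := R) (by simp [dist_eq_norm])
  calc volume.real (closedBall c R \ closedBall 0 R)
      ≤ volume.real (closedBall c R \ closedBall 0 (R - ‖c‖)) :=
        measureReal_mono (sdiff_subset_sdiff_right
          (closedBall_subset_closedBall (by linarith [norm_nonneg c])))
          (measure_ne_top_of_subset sdiff_subset measure_closedBall_lt_top.ne)
    _ = 4 / 3 * π * (R ^ 3 - (R - ‖c‖) ^ 3) := by
        rw [measureReal_sdiff hsub measurableSet_closedBall measure_closedBall_lt_top.ne,
          measureReal_closedBall_fin_three c (by linarith [norm_nonneg c]),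
          measureReal_closedBall_fin_three 0 (by linarith)]
        ring

theorem integral_closedBall_fun_norm (f : ℝ → ℝ) {R : ℝ} (hR : 0 ≤ R) :
    ∫ q in closedBall (0 : E3) R, f ‖q‖ = 4 * π * ∫ r in 0..R, r ^ 2 * f r := by
  have hind : ∀ q : E3, (closedBall 0 R).indicator (fun q => f ‖q‖) q
      = (Iic R).indicator f ‖q‖ := fun q => by
    by_cases hq : ‖q‖ ≤ R <;> simp [indicator, hq]
  have hball : volume.real (ball (0 : E3) 1) = 4 / 3 * π := by
    rw [measureReal_def, EuclideanSpace.volume_ball_fin_three]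
    rw [ENNReal.ofReal_one, one_pow, one_mul, ENNReal.toReal_ofReal (by positivity)]
    ring
  have hradial : ∫ y in Ioi 0, y ^ (3 - 1) • (Iic R).indicator f y = ∫ r in 0..R, r ^ 2 * f r := by
    simp only [smul_eq_mul, ← indicator_mul_right (Iic R) (fun r => r ^ 2) f]
    rw [setIntegral_indicator measurableSet_Iic, Ioi_inter_Iic, intervalIntegral.integral_of_le hR]
  rw [← integral_indicator measurableSet_closedBall, funext hind, integral_fun_norm_addHaar,
    finrank_euclideanSpace_fin, hball, hradial, nsmul_eq_mul, smul_eq_mul]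
  ring

theorem integral_closedBall_one_div_norm_sq_add_sq {a : ℝ} (ha : a ≠ 0) {R : ℝ} (hR : 0 ≤ R) :
    ∫ q in closedBall (0 : E3) R, 1 / (‖q‖ ^ 2 + a ^ 2) = 4 * π * (R - a * arctan (R / a)) := by
  refine (integral_closedBall_fun_norm (fun r => 1 / (r ^ 2 + a ^ 2)) hR).trans ?_
  have hderiv : ∀ r ∈ uIcc 0 R,
      HasDerivAt (fun r => r - a * arctan (r / a)) (r ^ 2 * (1 / (r ^ 2 + a ^ 2))) r := by
    intro r _
    refine ((hasDerivAt_id' r).sub (((hasDerivAt_arctan (r / a)).comp r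
      ((hasDerivAt_id' r).div_const a)).const_mul a)).congr_deriv ?_
    field_simp
    ring
  have hcont : Continuous fun r : ℝ => r ^ 2 * (1 / (r ^ 2 + a ^ 2)) := by
    fun_prop (disch := intro r; positivity)
  rw [intervalIntegral.integral_eq_sub_of_hasDerivAt hderiv (hcont.intervalIntegrable 0 R)]
  simp

theorem one_div_sq_add_sq_sub_one_div_le {a t R : ℝ} (ht : 0 ≤ t) (hR : 2 * t ≤ R) (hR0 : 0 < R) :
    1 / ((R - t) ^ 2 + a ^ 2) - 1 / ((R + t) ^ 2 + a ^ 2) ≤ 16 * t / R ^ 3 := by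
  have hden : R ^ 4 / 4 ≤ ((R - t) ^ 2 + a ^ 2) * ((R + t) ^ 2 + a ^ 2) := by
    have h₁ : (R / 2) ^ 2 ≤ (R - t) ^ 2 := by nlinarith
    have h₂ : R ^ 2 ≤ (R + t) ^ 2 := by nlinarith
    nlinarith [mul_le_mul h₁ h₂ (sq_nonneg R) (sq_nonneg (R - t)), sq_nonneg a,
      mul_nonneg (sq_nonneg (R - t)) (sq_nonneg a), mul_nonneg (sq_nonneg (R + t)) (sq_nonneg a)]
  have hpos : 0 < (R - t) ^ 2 + a ^ 2 := by nlinarith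
  calc 1 / ((R - t) ^ 2 + a ^ 2) - 1 / ((R + t) ^ 2 + a ^ 2)
      = 4 * R * t / (((R - t) ^ 2 + a ^ 2) * ((R + t) ^ 2 + a ^ 2)) := by
        field_simp
        ring
    _ ≤ 4 * R * t / (R ^ 4 / 4) := by gcongr
    _ = 16 * t / R ^ 3 := by
        field_simp
        ring

theorem tendsto_integral_closedBall_sub_integral_closedBall_zero {a : ℝ} (ha : 0 < a) (c : E3) :
    Tendsto (fun R => (∫ q in closedBall c R, 1 / (‖q‖ ^ 2 + a ^ 2))
      - ∫ q in closedBall (0 : E3) R, 1 / (‖q‖ ^ 2 + a ^ 2)) atTop (𝓝 0) := by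
  set t := ‖c‖
  have hint : ∀ x R, IntegrableOn (fun q : E3 => 1 / (‖q‖ ^ 2 + a ^ 2)) (closedBall x R) :=
    have hcont : Continuous fun q : E3 => 1 / (‖q‖ ^ 2 + a ^ 2) := by
      fun_prop (disch := intro q; positivity)
    fun x R => hcont.continuousOn.integrableOn_compact (isCompact_closedBall x R)
  refine squeeze_zero_norm' ?_ (tendsto_const_nhds.div_atTop tendsto_id :
    Tendsto (fun R => 64 * π * t ^ 2 / R) atTop (𝓝 0))
  filter_upwards [eventually_ge_atTop (2 * t), eventually_gt_atTop 0] with R hR hR0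
  have ht : 0 ≤ t := norm_nonneg c
  have hbounds : ∀ q ∈ symmDiff (closedBall c R) (closedBall 0 R),
      1 / (‖q‖ ^ 2 + a ^ 2) ∈ Icc (1 / ((R + t) ^ 2 + a ^ 2)) (1 / ((R - t) ^ 2 + a ^ 2)) := by
    intro q hq
    obtain ⟨hlo, hhi⟩ := norm_mem_Icc_of_mem_symmDiff_closedBall hq
    exact ⟨by gcongr, by gcongr; linarith⟩
  calc ‖(∫ q in closedBall c R, 1 / (‖q‖ ^ 2 + a ^ 2))
        - ∫ q in closedBall (0 : E3) R, 1 / (‖q‖ ^ 2 + a ^ 2)‖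
      ≤ (1 / ((R - t) ^ 2 + a ^ 2) - 1 / ((R + t) ^ 2 + a ^ 2))
          * volume.real (closedBall c R \ closedBall 0 R) :=
        abs_setIntegral_sub_setIntegral_le_of_measure_eq measurableSet_closedBall
          measurableSet_closedBall (hint c R) (hint 0 R) (Measure.addHaar_closedBall_center _ c R)
          measure_closedBall_lt_top.ne hbounds
    _ ≤ (16 * t / R ^ 3) * (4 / 3 * π * (R ^ 3 - (R - t) ^ 3)) := by
        gcongr
        · exact one_div_sq_add_sq_sub_one_div_le ht hR hR0
        · exact measureReal_closedBall_sdiff_closedBall_le c (by linarith)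
    _ ≤ (16 * t / R ^ 3) * (4 / 3 * π * (3 * t * R ^ 2)) := by
        gcongr
        nlinarith [mul_nonneg (sq_nonneg t) (show 0 ≤ 3 * R - t by linarith)]
    _ = 64 * π * t ^ 2 / R := by
        field_simp
        ring

theorem tendsto_integral_closedBall_one_div_norm_sq_add_sq_sub {a : ℝ} (ha : 0 < a) :
    Tendsto (fun R => (∫ q in closedBall (0 : E3) R, 1 / (‖q‖ ^ 2 + a ^ 2)) - 4 * π * R) atTop
      (𝓝 (-(2 * π ^ 2 * a))) := by
  have harctan : Tendsto (fun R => -(4 * π * a) * arctan (R / a)) atTop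
      (𝓝 (-(4 * π * a) * (π / 2))) :=
    ((tendsto_arctan_atTop.mono_right nhdsWithin_le_nhds).comp
      (tendsto_id.atTop_div_const ha)).const_mul _
  rw [show -(4 * π * a) * (π / 2) = -(2 * π ^ 2 * a) by ring] at harctan
  refine harctan.congr' ?_
  filter_upwards [eventually_ge_atTop 0] with R hR
  rw [integral_closedBall_one_div_norm_sq_add_sq ha.ne' hR]
  ring

theorem Gker_add_eq_norm_add_smul_sq (m lam : ℝ) (hm : m + 1 ≠ 0) (p q : E3) :
    Gker m p q + lam = ‖q + (mu m / 2) • p‖ ^ 2 + (nu m * ‖p‖ ^ 2 + lam) := by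
  rw [Gker, norm_add_sq_real, real_inner_smul_right, norm_smul, mul_pow, norm_eq_abs, sq_abs,
    real_inner_comm, mu, nu]
  field_simp
  ring

/-- The large-momentum asymptotics underlying the Ter-Martirosyan–Skornyakov boundary
condition: the truncated integral `∫_{|q| ≤ R} dq/(G(p,q)+λ)` grows like `4πR` with
finite remainder `−2π²√(ν|p|²+λ)`. -/
theorem tms_truncated_integral_asymptotics
    (m lam : ℝ) (hm : 0 < m) (hlam : 0 < lam) (p : E3) :
    Filter.Tendsto
      (fun R : ℝ =>
        (∫ q in Metric.closedBall (0 : E3) R, 1 / (Gker m p q + lam)) - 4 * Real.pi * R)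
      Filter.atTop
      (nhds (-(2 * Real.pi ^ 2 * Real.sqrt (nu m * ‖p‖ ^ 2 + lam)))) := by
  have hpos : 0 < nu m * ‖p‖ ^ 2 + lam := by unfold nu; positivity
  set a := √(nu m * ‖p‖ ^ 2 + lam)
  have ha : 0 < a := sqrt_pos.2 hpos
  have hshift : ∀ R, ∫ q in closedBall 0 R, 1 / (Gker m p q + lam)
      = ∫ q in closedBall ((mu m / 2) • p) R, 1 / (‖q‖ ^ 2 + a ^ 2) := fun R => by
    have hsq : a ^ 2 = nu m * ‖p‖ ^ 2 + lam := sq_sqrt hpos.le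
    simp_rw [Gker_add_eq_norm_add_smul_sq m lam (by positivity), ← hsq]
    exact setIntegral_closedBall_comp_add_right volume (fun q => 1 / (‖q‖ ^ 2 + a ^ 2)) _ R
  have hsum := (tendsto_integral_closedBall_sub_integral_closedBall_zero ha ((mu m / 2) • p)).add
    (tendsto_integral_closedBall_one_div_norm_sq_add_sq_sub ha)
  rw [zero_add] at hsum
  exact hsum.congr fun R => by rw [hshift]; ring
end
end

section
/- Let m > 0 and λ > 0, and let f : ℝ³ → ℂ be measurable with ∫_{ℝ³} (1+|p|²)^{−1/2} |f(p)|² dp < ∞. Then ∬_{ℝ³×ℝ³} |f(p) − f(q)|² / (G(p,q)+λ)² dp dq = ∫_{ℝ³} conj(f(p)) ( 2π² f(p) / √(ν|p|²+λ) − 2 ∫_{ℝ³} f(q) / (G(p,q)+λ)² dq ) dp. (This identifies the L²(ℝ⁶)-norm of the 'potential' u_f^λ(p,q) = (f(p)−f(q))/(G(p,q)+λ) generated by the charge f with the quadratic form ⟨f, W_λ f⟩ of the explicit operator W_λ.) -/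
open MeasureTheory
open scoped RealInnerProductSpace

noncomputable section

/-! Completing the square gives `G(p,q) + λ = |q + (μ/2) p|² + (ν|p|² + λ)`, so translation
invariance and polar coordinates turn `∫ (G(p,q) + λ)⁻² dq` into the radial integral
`4π ∫₀^∞ r² / (r² + s²)² dr = π² / s` with `s = √(ν|p|² + λ)`.

The identity itself holds for every nonnegative symmetric kernel `W` with `K(p) = ∫ W(p,q) dq`:
`|f(p) - f(q)|² = conj f(p) (f(p) - f(q)) + conj f(q) (f(q) - f(p))`, and exchanging `p` and `q`
in the second term gives `∬ |f(p) - f(q)|² W = 2 ∫ conj f(p) (K(p) f(p) - ∫ W(p,q) f(q) dq) dp`.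
Fubini applies because `|f(p) f(q)| W ≤ (|f(p)|² + |f(q)|²) W / 2` and `∫ |f|² K < ∞`, which is
what the weighted `L²` condition on `f` gives here, as `K(p) ≲ (1 + |p|²)^(-1/2)`. -/

open Filter Set Real Function
open scoped Topology

section SymmetricKernel

variable {α 𝕜 : Type*} [RCLike 𝕜] [MeasurableSpace α] {μ : Measure α} [SFinite μ]
  {W : α → α → ℝ} {f : α → 𝕜}

lemma RCLike.ofReal_norm_sub_sq (x y : 𝕜) :
    ((‖x - y‖ ^ 2 : ℝ) : 𝕜) = star x * (x - y) + star y * (y - x) := by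
  rw [RCLike.ofReal_pow, ← RCLike.conj_mul, map_sub, starRingEnd_apply, starRingEnd_apply]
  ring

lemma integrable_norm_sq_mul_kernel (hW_meas : Measurable (uncurry W))
    (hW_nonneg : ∀ p q, 0 ≤ W p q) (hW_int : ∀ p, Integrable (W p) μ) (hf : Measurable f)
    (hfK : Integrable (fun p => ‖f p‖ ^ 2 * ∫ q, W p q ∂μ) μ) :
    Integrable (fun z : α × α => ‖f z.1‖ ^ 2 * W z.1 z.2) (μ.prod μ) := by
  refine (integrable_prod_iff ?_).2
    ⟨.of_forall fun p => (hW_int p).const_mul (‖f p‖ ^ 2), hfK.congr (.of_forall fun p => ?_)⟩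
  · exact (((hf.comp measurable_fst).norm.pow_const 2).mul hW_meas).aestronglyMeasurable
  · simp only [norm_of_nonneg (mul_nonneg (sq_nonneg _) (hW_nonneg _ _)), integral_const_mul]

lemma integrable_norm_sq_mul_kernel_swap (hW_meas : Measurable (uncurry W))
    (hW_nonneg : ∀ p q, 0 ≤ W p q) (hW_symm : ∀ p q, W p q = W q p)
    (hW_int : ∀ p, Integrable (W p) μ) (hf : Measurable f)
    (hfK : Integrable (fun p => ‖f p‖ ^ 2 * ∫ q, W p q ∂μ) μ) :
    Integrable (fun z : α × α => ‖f z.2‖ ^ 2 * W z.1 z.2) (μ.prod μ) :=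
  (integrable_norm_sq_mul_kernel hW_meas hW_nonneg hW_int hf hfK).swap.congr
    (.of_forall fun z => by
      show ‖f z.2‖ ^ 2 * W z.2 z.1 = _
      rw [hW_symm z.2 z.1])

lemma integrable_star_mul_mul_kernel (hW_meas : Measurable (uncurry W))
    (hW_nonneg : ∀ p q, 0 ≤ W p q) (hW_symm : ∀ p q, W p q = W q p)
    (hW_int : ∀ p, Integrable (W p) μ) (hf : Measurable f)
    (hfK : Integrable (fun p => ‖f p‖ ^ 2 * ∫ q, W p q ∂μ) μ) :
    Integrable (fun z : α × α => star (f z.1) * f z.2 * (W z.1 z.2 : 𝕜)) (μ.prod μ) := by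
  refine (((integrable_norm_sq_mul_kernel hW_meas hW_nonneg hW_int hf hfK).add
    (integrable_norm_sq_mul_kernel_swap hW_meas hW_nonneg hW_symm hW_int hf hfK)).div_const
    2).mono' ?_ (.of_forall fun z => ?_)
  · exact (((continuous_star.measurable.comp (hf.comp measurable_fst)).mul
      (hf.comp measurable_snd)).mul (RCLike.measurable_ofReal.comp hW_meas)).aestronglyMeasurable
  · have hAMGM := two_mul_le_add_sq ‖f z.1‖ ‖f z.2‖
    rw [norm_mul, norm_mul, norm_star, RCLike.norm_ofReal, abs_of_nonneg (hW_nonneg _ _),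
      Pi.add_apply]
    nlinarith [mul_le_mul_of_nonneg_right hAMGM (hW_nonneg z.1 z.2)]

lemma ae_integrable_mul_kernel (hW_meas : Measurable (uncurry W))
    (hW_nonneg : ∀ p q, 0 ≤ W p q) (hW_symm : ∀ p q, W p q = W q p)
    (hW_int : ∀ p, Integrable (W p) μ) (hf : Measurable f)
    (hfK : Integrable (fun p => ‖f p‖ ^ 2 * ∫ q, W p q ∂μ) μ) :
    ∀ᵐ p ∂μ, Integrable (fun q => f q * (W p q : 𝕜)) μ := by
  filter_upwards [(integrable_norm_sq_mul_kernel_swap hW_meas hW_nonneg hW_symm hW_int hf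
    hfK).prod_right_ae] with p hp
  refine (((hW_int p).add hp).div_const 2).mono'
    (hf.mul (RCLike.measurable_ofReal.comp hW_meas.of_uncurry_left)).aestronglyMeasurable
    (.of_forall fun q => ?_)
  have hAMGM := two_mul_le_add_sq 1 ‖f q‖
  rw [norm_mul, RCLike.norm_ofReal, abs_of_nonneg (hW_nonneg _ _), Pi.add_apply]
  nlinarith [mul_le_mul_of_nonneg_right hAMGM (hW_nonneg p q)]

theorem integral_integral_norm_sub_sq_mul_kernel (hW_meas : Measurable (uncurry W))
    (hW_nonneg : ∀ p q, 0 ≤ W p q) (hW_symm : ∀ p q, W p q = W q p)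
    (hW_int : ∀ p, Integrable (W p) μ) (hf : Measurable f)
    (hfK : Integrable (fun p => ‖f p‖ ^ 2 * ∫ q, W p q ∂μ) μ) :
    ((∫ p, ∫ q, ‖f p - f q‖ ^ 2 * W p q ∂μ ∂μ : ℝ) : 𝕜)
      = 2 * ∫ p, star (f p) * ((∫ q, W p q ∂μ : ℝ) * f p - ∫ q, f q * W p q ∂μ) ∂μ := by
  set g : α × α → 𝕜 := fun z => star (f z.1) * (f z.1 - f z.2) * W z.1 z.2 with hg_def
  have hg : Integrable g (μ.prod μ) := by
    refine ((integrable_norm_sq_mul_kernel hW_meas hW_nonneg hW_int hf hfK).ofReal.sub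
      (integrable_star_mul_mul_kernel hW_meas hW_nonneg hW_symm hW_int hf hfK)).congr
      (.of_forall fun z => ?_)
    simp only [hg_def, Pi.sub_apply, RCLike.ofReal_mul, RCLike.ofReal_pow, ← RCLike.conj_mul,
      starRingEnd_apply]
    ring
  have hsplit : ∀ z : α × α,
      ((‖f z.1 - f z.2‖ ^ 2 * W z.1 z.2 : ℝ) : 𝕜) = g z + g z.swap := fun z => by
    simp only [RCLike.ofReal_mul, RCLike.ofReal_norm_sub_sq, hg_def, Prod.fst_swap,
      Prod.snd_swap, hW_symm z.2 z.1]
    ring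
  have hL : Integrable (fun z : α × α => ‖f z.1 - f z.2‖ ^ 2 * W z.1 z.2) (μ.prod μ) := by
    simpa only [RCLike.ofReal_re] using
      ((hg.add hg.swap).congr (.of_forall fun z => (hsplit z).symm)).re
  have hfibre : ∀ᵐ p ∂μ, ∫ q, g (p, q) ∂μ
      = star (f p) * ((∫ q, W p q ∂μ : ℝ) * f p - ∫ q, f q * W p q ∂μ) := by
    filter_upwards [ae_integrable_mul_kernel hW_meas hW_nonneg hW_symm hW_int hf hfK] with p hp
    simp only [hg_def, mul_assoc, sub_mul]
    rw [integral_const_mul, integral_sub ((hW_int p).ofReal.const_mul _) hp, integral_const_mul,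
      integral_ofReal, mul_comm (f p)]
  calc ((∫ p, ∫ q, ‖f p - f q‖ ^ 2 * W p q ∂μ ∂μ : ℝ) : 𝕜)
      = ∫ z, ((‖f z.1 - f z.2‖ ^ 2 * W z.1 z.2 : ℝ) : 𝕜) ∂μ.prod μ := by
        rw [integral_ofReal, integral_prod _ hL]
    _ = ∫ z, g z ∂μ.prod μ + ∫ z, g z.swap ∂μ.prod μ := by
        simp_rw [hsplit]
        exact integral_add hg hg.swap
    _ = 2 * ∫ z, g z ∂μ.prod μ := by
        rw [integral_prod_swap]
        ring
    _ = _ := by rw [integral_prod _ hg, integral_congr_ae hfibre]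

end SymmetricKernel

section RadialIntegral

def radialPrimitive (s r : ℝ) : ℝ := (arctan (r / s) / s - r / (r ^ 2 + s ^ 2)) / 2

lemma hasDerivAt_radialPrimitive {s : ℝ} (hs : s ≠ 0) (r : ℝ) :
    HasDerivAt (radialPrimitive s) (r ^ 2 / (r ^ 2 + s ^ 2) ^ 2) r := by
  have hrs : r ^ 2 + s ^ 2 ≠ 0 := by positivity
  have hquot : HasDerivAt (fun r : ℝ => r / (r ^ 2 + s ^ 2))
      ((1 * (r ^ 2 + s ^ 2) - r * (2 * r)) / (r ^ 2 + s ^ 2) ^ 2) r := by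
    refine (hasDerivAt_id r).div ?_ hrs
    simpa using (hasDerivAt_pow 2 r).add_const (s ^ 2)
  have harctan := ((hasDerivAt_id' r).div_const s).arctan
  refine (((harctan.div_const s).sub hquot).div_const 2).congr_deriv ?_
  field_simp
  ring

lemma tendsto_radialPrimitive_atTop {s : ℝ} (hs : 0 < s) :
    Tendsto (radialPrimitive s) atTop (𝓝 (π / (4 * s))) := by
  have harctan : Tendsto (fun r => arctan (r / s)) atTop (𝓝 (π / 2)) :=
    (tendsto_arctan_atTop.mono_right nhdsWithin_le_nhds).comp (tendsto_id.atTop_div_const hs)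
  have hquot : Tendsto (fun r : ℝ => r / (r ^ 2 + s ^ 2)) atTop (𝓝 0) := by
    have hinv : Tendsto (fun r : ℝ => r⁻¹) atTop (𝓝 0) := tendsto_inv_atTop_zero
    refine tendsto_of_tendsto_of_tendsto_of_le_of_le' tendsto_const_nhds hinv ?_ ?_ <;>
      filter_upwards [eventually_gt_atTop 0] with r hr
    · positivity
    · rw [div_le_iff₀ (by positivity)]
      field_simp
      nlinarith [sq_nonneg s]
  unfold radialPrimitive
  convert ((harctan.div_const s).sub hquot).div_const 2 using 2
  field_simp
  ring

lemma integral_Ioi_sq_div_sq_add_sq_sq {s : ℝ} (hs : 0 < s) :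
    ∫ r in Ioi (0 : ℝ), r ^ 2 / (r ^ 2 + s ^ 2) ^ 2 = π / (4 * s) := by
  rw [integral_Ioi_of_hasDerivAt_of_nonneg' (fun r _ => hasDerivAt_radialPrimitive hs.ne' r)
    (fun r _ => by positivity) (tendsto_radialPrimitive_atTop hs)]
  simp [radialPrimitive]

lemma integrableOn_Ioi_sq_div_sq_add_sq_sq {s : ℝ} (hs : 0 < s) :
    IntegrableOn (fun r : ℝ => r ^ 2 / (r ^ 2 + s ^ 2) ^ 2) (Ioi 0) :=
  integrableOn_Ioi_deriv_of_nonneg' (fun r _ => hasDerivAt_radialPrimitive hs.ne' r)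
    (fun r _ => by positivity) (tendsto_radialPrimitive_atTop hs)

lemma integrable_inv_norm_sq_add_sq_sq {s : ℝ} (hs : 0 < s) :
    Integrable (fun q : E3 => ((‖q‖ ^ 2 + s ^ 2) ^ 2)⁻¹) := by
  refine (integrable_fun_norm_addHaar volume (f := fun r => ((r ^ 2 + s ^ 2) ^ 2)⁻¹)).2 ?_
  simpa [finrank_euclideanSpace_fin, div_eq_mul_inv] using integrableOn_Ioi_sq_div_sq_add_sq_sq hs

lemma integral_inv_norm_sq_add_sq_sq {s : ℝ} (hs : 0 < s) :
    ∫ q : E3, ((‖q‖ ^ 2 + s ^ 2) ^ 2)⁻¹ = π ^ 2 / s := by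
  rw [integral_fun_norm_addHaar volume (fun r => ((r ^ 2 + s ^ 2) ^ 2)⁻¹)]
  simp only [finrank_euclideanSpace_fin, smul_eq_mul, ← div_eq_mul_inv]
  rw [integral_Ioi_sq_div_sq_add_sq_sq hs, measureReal_def, EuclideanSpace.volume_ball_fin_three,
    ENNReal.ofReal_one, one_pow, one_mul, ENNReal.toReal_ofReal (by positivity), nsmul_eq_mul]
  field_simp
  ring

end RadialIntegral

section Kernel

variable {m : ℝ}

lemma nu_add_mu_div_two_sq (hm : m + 1 ≠ 0) : nu m + (mu m / 2) ^ 2 = 1 := by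
  unfold nu mu
  field_simp
  ring

lemma nu_pos (hm : 0 < m) : 0 < nu m := by
  unfold nu
  positivity

lemma nu_mul_sq_add_pos (hm : 0 < m) {lam : ℝ} (hlam : 0 < lam) (x : ℝ) :
    0 < nu m * x ^ 2 + lam := by
  have := nu_pos hm
  positivity

lemma Gker_comm (m : ℝ) (p q : E3) : Gker m p q = Gker m q p := by
  rw [Gker, Gker, real_inner_comm]
  ring

lemma Gker_eq_norm_add_smul_sq (hm : m + 1 ≠ 0) (p q : E3) :
    Gker m p q = ‖q + (mu m / 2) • p‖ ^ 2 + nu m * ‖p‖ ^ 2 := by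
  rw [norm_add_sq_real, real_inner_smul_right, norm_smul, mul_pow, Real.norm_eq_abs, sq_abs,
    real_inner_comm, Gker]
  linear_combination (-‖p‖ ^ 2) * nu_add_mu_div_two_sq hm

lemma measurable_inv_Gker_add_sq (m lam : ℝ) :
    Measurable (uncurry fun p q : E3 => ((Gker m p q + lam) ^ 2)⁻¹) := by
  unfold Gker
  fun_prop

lemma integrable_inv_Gker_add_sq (hm : 0 < m) {lam : ℝ} (hlam : 0 < lam) (p : E3) :
    Integrable (fun q => ((Gker m p q + lam) ^ 2)⁻¹) := by
  have hA := nu_mul_sq_add_pos hm hlam ‖p‖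
  refine ((integrable_inv_norm_sq_add_sq_sq (sqrt_pos.2 hA)).comp_add_right
    ((mu m / 2) • p)).congr (.of_forall fun q => ?_)
  simp only [Gker_eq_norm_add_smul_sq (by positivity : m + 1 ≠ 0), sq_sqrt hA.le, add_assoc]

lemma integral_inv_Gker_add_sq (hm : 0 < m) {lam : ℝ} (hlam : 0 < lam) (p : E3) :
    ∫ q, ((Gker m p q + lam) ^ 2)⁻¹ = π ^ 2 / √(nu m * ‖p‖ ^ 2 + lam) := by
  have hA := nu_mul_sq_add_pos hm hlam ‖p‖
  calc ∫ q, ((Gker m p q + lam) ^ 2)⁻¹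
      = ∫ q, ((‖q + (mu m / 2) • p‖ ^ 2 + √(nu m * ‖p‖ ^ 2 + lam) ^ 2) ^ 2)⁻¹ := by
        simp only [Gker_eq_norm_add_smul_sq (by positivity : m + 1 ≠ 0), sq_sqrt hA.le, add_assoc]
    _ = π ^ 2 / √(nu m * ‖p‖ ^ 2 + lam) := by
        rw [integral_add_right_eq_self (fun q => ((‖q‖ ^ 2 + _ ^ 2) ^ 2)⁻¹),
          integral_inv_norm_sq_add_sq_sq (sqrt_pos.2 hA)]

end Kernel

lemma integrable_div_sqrt_of_integrable_rpow_mul {E : Type*} [NormedAddCommGroup E]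
    [MeasurableSpace E] [OpensMeasurableSpace E] {μ : Measure E} {g : E → ℝ}
    (hg : AEStronglyMeasurable g μ) {a b : ℝ} (ha : 0 < a) (hb : 0 < b)
    (h : Integrable (fun p => (1 + ‖p‖ ^ 2) ^ (-(1 : ℝ) / 2) * g p) μ) :
    Integrable (fun p => g p / √(a * ‖p‖ ^ 2 + b)) μ := by
  set c := min a b
  have hc : 0 < c := lt_min ha hb
  refine (h.norm.const_mul (√c)⁻¹).mono'
    (hg.div₀ (by fun_prop : Measurable fun p : E => √(a * ‖p‖ ^ 2 + b)).aestronglyMeasurable)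
    (.of_forall fun p => ?_)
  have hle : √c * √(1 + ‖p‖ ^ 2) ≤ √(a * ‖p‖ ^ 2 + b) := by
    rw [← sqrt_mul hc.le]
    exact sqrt_le_sqrt (by nlinarith [min_le_left a b, min_le_right a b, sq_nonneg ‖p‖])
  have hweight : (1 + ‖p‖ ^ 2) ^ (-(1 : ℝ) / 2) = (√(1 + ‖p‖ ^ 2))⁻¹ := by
    rw [neg_div, rpow_neg (by positivity), sqrt_eq_rpow]
  rw [norm_div, norm_mul, norm_of_nonneg (sqrt_nonneg _), hweight, norm_inv,
    norm_of_nonneg (sqrt_nonneg _), ← mul_assoc, ← mul_inv, inv_mul_eq_div]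
  exact div_le_div_of_nonneg_left (norm_nonneg _) (by positivity) hle

/-- The `L²(ℝ⁶)`-norm of the potential `u_f^λ(p,q) = (f(p)−f(q))/(G(p,q)+λ)`
generated by the charge `f` coincides with the quadratic form `⟨f, W_λ f⟩` of the
explicit operator `W_λ`. -/
theorem potential_norm_equals_Wlambda_form
    (m lam : ℝ) (hm : 0 < m) (hlam : 0 < lam)
    (f : E3 → ℂ) (hf : Measurable f)
    (hf2 : Integrable (fun p => (1 + ‖p‖ ^ 2) ^ (-(1 : ℝ) / 2) * ‖f p‖ ^ 2)) :
    ((∫ p : E3, ∫ q : E3, ‖f p - f q‖ ^ 2 / (Gker m p q + lam) ^ 2 : ℝ) : ℂ)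
      = ∫ p : E3, star (f p) *
          (((2 * Real.pi ^ 2 : ℝ) : ℂ) * f p
              / ((Real.sqrt (nu m * ‖p‖ ^ 2 + lam) : ℝ) : ℂ)
            - 2 * ∫ q : E3, f q / (((Gker m p q + lam) ^ 2 : ℝ) : ℂ)) := by
  have hK := integral_inv_Gker_add_sq hm hlam
  have hfK : Integrable (fun p => ‖f p‖ ^ 2 * ∫ q, ((Gker m p q + lam) ^ 2)⁻¹) := by
    simp_rw [hK, mul_div, mul_comm _ (π ^ 2), ← mul_div]
    exact (integrable_div_sqrt_of_integrable_rpow_mul (hf.norm.pow_const 2).aestronglyMeasurable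
      (nu_pos hm) hlam hf2).const_mul _
  calc ((∫ p : E3, ∫ q : E3, ‖f p - f q‖ ^ 2 / (Gker m p q + lam) ^ 2 : ℝ) : ℂ)
      = 2 * ∫ p, star (f p) * ((∫ q, ((Gker m p q + lam) ^ 2)⁻¹ : ℝ) * f p
          - ∫ q, f q * (((Gker m p q + lam) ^ 2)⁻¹ : ℝ)) := by
        simp_rw [div_eq_mul_inv]
        exact integral_integral_norm_sub_sq_mul_kernel (measurable_inv_Gker_add_sq m lam)
          (fun _ _ => by positivity) (fun p q => by rw [Gker_comm])
          (integrable_inv_Gker_add_sq hm hlam) hf hfK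
    _ = _ := by
        rw [← integral_const_mul]
        refine integral_congr_ae (.of_forall fun p => ?_)
        simp only [hK, Complex.ofReal_inv, ← div_eq_mul_inv]
        push_cast
        ring
end
end
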